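/- Let G be a finite simple graph with vertex set V and edge set E, let H be the simple graph on V ⊕ E in which u ∈ V is adjacent to e ∈ E exactly when u is an endpoint of e, and let k be a natural number with k ≤ |V|. Then G has a vertex cover of size at most k if and only if there exists a set S ⊆ V with |S| ≤ k such that every connected component of the subgraph of H induced on {u ∈ V : u ∉ S} ⊕ E contains at most one vertex coming from V. -/
import Mathlib


/-- The bipartite incidence graph `H` of a simple graph `G`: vertex set
`V ⊕ E(G)`, with `u ∈ V` adjacent to `e ∈ E(G)` exactly when `u` is an
endpoint of `e` (and no other adjacencies). -/
def incidenceBipartite {V : Type*} (G : SimpleGraph V) :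
    SimpleGraph (V ⊕ ↥G.edgeSet) :=
  SimpleGraph.fromRel fun x y =>
    ∃ (u : V) (e : ↥G.edgeSet), x = Sum.inl u ∧ y = Sum.inr e ∧ u ∈ (e : Sym2 V)

/-- For `k ≤ |V|`, the graph `G` has a vertex cover of size
at most `k` iff there is a set `S ⊆ V` with `|S| ≤ k` such that every
connected component of the subgraph of the incidence bipartite graph `H`
induced on `(V \ S) ⊕ E` contains at most one vertex coming from `V`
(i.e., a Backbone Set of size at most `k`). -/
theorem vertexCover_le_k_iff_backbone_le_k
    {V : Type*} [Fintype V] [DecidableEq V] (G : SimpleGraph V)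
    (k : ℕ) (hk : k ≤ Fintype.card V) :
    (∃ S : Finset V, S.card ≤ k ∧ ∀ ⦃u v : V⦄, G.Adj u v → u ∈ S ∨ v ∈ S) ↔
      ∃ S : Finset V, S.card ≤ k ∧
        ∀ x y : {z : V ⊕ ↥G.edgeSet | ∀ u : V, z = Sum.inl u → u ∉ S},
          ((incidenceBipartite G).induce
              {z : V ⊕ ↥G.edgeSet | ∀ u : V, z = Sum.inl u → u ∉ S}).Reachable x y →
          ∀ u v : V, (x : V ⊕ ↥G.edgeSet) = Sum.inl u →
            (y : V ⊕ ↥G.edgeSet) = Sum.inl v → u = v := by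
  constructor
  · rintro ⟨S, hS, hcov⟩
    refine ⟨S, hS, ?_⟩
    set s : Set (V ⊕ ↥G.edgeSet) := {z | ∀ u : V, z = Sum.inl u → u ∉ S} with hs
    intro x y hreach u v hx hy
    have hu : u ∉ S := x.2 u hx
    -- invariant along walks
    have key : ∀ (a b : s), ((incidenceBipartite G).induce s).Walk a b →
        ((a : V ⊕ ↥G.edgeSet) = Sum.inl u ∨
          ∃ e : ↥G.edgeSet, (a : V ⊕ ↥G.edgeSet) = Sum.inr e ∧ u ∈ (e : Sym2 V)) →
        ((b : V ⊕ ↥G.edgeSet) = Sum.inl u ∨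
          ∃ e : ↥G.edgeSet, (b : V ⊕ ↥G.edgeSet) = Sum.inr e ∧ u ∈ (e : Sym2 V)) := by
      intro a b w
      induction w with
      | nil => exact id
      | @cons a c b hadj p ih =>
        intro ha
        apply ih
        have hadj' : (incidenceBipartite G).Adj a.1 c.1 := hadj
        rw [incidenceBipartite, SimpleGraph.fromRel_adj] at hadj'
        obtain ⟨hne, hr | hr⟩ := hadj'
        · obtain ⟨w, e, haw, hce, hwe⟩ := hr
          rcases ha with ha | ⟨e', ha⟩
          · rw [ha] at haw
            obtain rfl : u = w := Sum.inl.injEq .. ▸ haw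
            exact Or.inr ⟨e, hce, hwe⟩
          · rw [ha.1] at haw; exact absurd haw (by simp)
        · obtain ⟨w, e, hcw, hae, hwe⟩ := hr
          rcases ha with ha | ⟨e', ha, hue'⟩
          · rw [ha] at hae; exact absurd hae (by simp)
          · rw [ha] at hae
            have heq : e' = e := (Sum.inr.injEq (α := V) e' e).mp hae
            rw [heq] at hue'
            -- w ∈ e, u ∈ e, both need to avoid S; S covers e, so w = u
            have hwS : w ∉ S := c.2 w hcw
            by_cases hwu : w = u
            · exact Or.inl (hwu ▸ hcw)
            · exfalso
              have hedge : (e : Sym2 V) = s(u, w) :=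
                ((Sym2.mem_and_mem_iff (Ne.symm hwu)).mp ⟨hue', hwe⟩)
              have : G.Adj u w := by
                have he := e.2
                rw [hedge, SimpleGraph.mem_edgeSet] at he
                exact he
              rcases hcov this with h | h
              · exact hu h
              · exact hwS h
    obtain ⟨w⟩ := hreach
    rcases key x y w (Or.inl hx) with h | ⟨e, he, _⟩
    · rw [hy] at h; exact (Sum.inl.injEq .. ▸ h).symm
    · rw [hy] at he; exact absurd he (by simp)
  · rintro ⟨S, hS, hback⟩
    refine ⟨S, hS, ?_⟩
    intro u v hadj
    by_contra h
    push_neg at h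
    obtain ⟨hu, hv⟩ := h
    set s : Set (V ⊕ ↥G.edgeSet) := {z | ∀ u : V, z = Sum.inl u → u ∉ S} with hs
    have he : s(u, v) ∈ G.edgeSet := hadj
    set e : ↥G.edgeSet := ⟨s(u, v), he⟩ with hedef
    have hxs : (Sum.inl u : V ⊕ ↥G.edgeSet) ∈ s := by
      intro w hw; obtain rfl : u = w := Sum.inl.injEq .. ▸ hw; exact hu
    have hys : (Sum.inl v : V ⊕ ↥G.edgeSet) ∈ s := by
      intro w hw; obtain rfl : v = w := Sum.inl.injEq .. ▸ hw; exact hv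
    have hzs : (Sum.inr e : V ⊕ ↥G.edgeSet) ∈ s := by
      intro w hw; exact absurd hw (by simp)
    have hadj1 : ((incidenceBipartite G).induce s).Adj ⟨Sum.inl u, hxs⟩ ⟨Sum.inr e, hzs⟩ := by
      show (incidenceBipartite G).Adj (Sum.inl u) (Sum.inr e)
      rw [incidenceBipartite, SimpleGraph.fromRel_adj]
      exact ⟨by simp, Or.inl ⟨u, e, rfl, rfl, by simp [hedef]⟩⟩
    have hadj2 : ((incidenceBipartite G).induce s).Adj ⟨Sum.inr e, hzs⟩ ⟨Sum.inl v, hys⟩ := by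
      show (incidenceBipartite G).Adj (Sum.inr e) (Sum.inl v)
      rw [incidenceBipartite, SimpleGraph.fromRel_adj]
      exact ⟨by simp, Or.inr ⟨v, e, rfl, rfl, by simp [hedef]⟩⟩
    have hreach : ((incidenceBipartite G).induce s).Reachable ⟨Sum.inl u, hxs⟩ ⟨Sum.inl v, hys⟩ :=
      (hadj1.reachable).trans hadj2.reachable
    exact hadj.ne (hback ⟨Sum.inl u, hxs⟩ ⟨Sum.inl v, hys⟩ hreach u v rfl rfl)
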